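/- arXiv:1010.0319 — 3 statements merged into one kernel-verified Lean document; each statement's English description precedes it below -/
import Mathlib

section
/- Let Λ = (G,γ) be an admissible d-colored multigraph with nonempty vertex set. Then P_Λ is a simplicial poset with least element (G, {1,…,d}); for every (H,S) ∈ P_Λ the interval [(G,{1,…,d}), (H,S)] is order-isomorphic to the lattice of all subsets of {1,…,d} \ S, so that (H,S) has rank d − #S; and dim P_Λ = d − 1. -/
noncomputable section
attribute [local instance] Classical.propDecidable

/-- A finite multigraph with colored edges, given by a finite vertex set `Vs` inside an
ambient type `V` and a finite set of edges; an edge is a triple `(u, v, i)` recording its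
two endpoints (in an arbitrary chosen orientation) and its color `i`.  Since every vertex
of an admissible colored multigraph is incident to at most one edge of each color, this
faithfully represents the multigraphs occurring in crystallization theory. -/
structure MG (V : Type) where
  Vs : Finset V
  Es : Finset (V × V × ℕ)

namespace MG

variable {V : Type}

/-- The edge `e` joins the vertices `u` and `v`, i.e. `φ(e) = {u, v}`. -/
def joins (e : V × V × ℕ) (u v : V) : Prop :=
  (e.1 = u ∧ e.2.1 = v) ∨ (e.1 = v ∧ e.2.1 = u)

/-- The vertex `v` is an endpoint of the edge `e`. -/
def incid (e : V × V × ℕ) (v : V) : Prop := e.1 = v ∨ e.2.1 = v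

/-- Adjacency in the spanning subgraph `G_S` of edges whose color lies in `S`. -/
def Adj (G : MG V) (S : Finset ℕ) (u v : V) : Prop :=
  u ∈ G.Vs ∧ v ∈ G.Vs ∧ ∃ e ∈ G.Es, e.2.2 ∈ S ∧ joins e u v

/-- `G.Conn S u v`: `u` and `v` are connected by a path of edges of `G_S`.
Two vertices are *disconnected* on `G_S` if `¬ G.Conn S u v`. -/
def Conn (G : MG V) (S : Finset ℕ) : V → V → Prop :=
  Relation.ReflTransGen (G.Adj S)

/-- Well-formedness of a multigraph with colors in `K`: endpoints of edges are vertices,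
there are no loops, and all colors lie in `K`. -/
def WF (K : Finset ℕ) (G : MG V) : Prop :=
  ∀ e ∈ G.Es, e.1 ∈ G.Vs ∧ e.2.1 ∈ G.Vs ∧ e.1 ≠ e.2.1 ∧ e.2.2 ∈ K

/-- Admissibility of a `K`-colored multigraph: it is (loopless and) connected, and for
each color `i ∈ K` the edges of color `i` form a perfect matching of the vertex set. -/
def Admissible (K : Finset ℕ) (G : MG V) : Prop :=
  WF K G ∧ (∀ u ∈ G.Vs, ∀ v ∈ G.Vs, G.Conn K u v) ∧
    (∀ i ∈ K, ∀ v ∈ G.Vs, ∃! e, e ∈ G.Es ∧ e.2.2 = i ∧ incid e v)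

/-- The connected component of `G_S` containing the vertex `v`. -/
def comp (G : MG V) (S : Finset ℕ) (v : V) : Set V := {w | G.Conn S v w}

/-- The poset `P_Λ` associated to a `K`-colored multigraph: its elements are pairs
`(H, S)` of a subset `S ⊆ K` and a connected component `H` of `G_S`. -/
def PElem (K : Finset ℕ) (G : MG V) : Type :=
  {p : Set V × Finset ℕ // p.2 ⊆ K ∧ ∃ v ∈ G.Vs, p.1 = G.comp p.2 v}

/-- The order of `P_Λ`: `(H, S) ≤ (H', S')` iff `S' ⊆ S` and `H' ⊆ H`
(so that `(G, K)` is the least element). -/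
instance (K : Finset ℕ) (G : MG V) : PartialOrder (PElem K G) where
  le p q := q.1.2 ⊆ p.1.2 ∧ q.1.1 ⊆ p.1.1
  le_refl p := ⟨subset_rfl, subset_rfl⟩
  le_trans p q r h₁ h₂ := ⟨h₂.1.trans h₁.1, h₂.2.trans h₁.2⟩
  le_antisymm p q h₁ h₂ :=
    Subtype.ext (Prod.ext (subset_antisymm h₂.2 h₁.2) (subset_antisymm h₂.1 h₁.1))

/-- The subgraph of `G` with vertex set `H` and the edges of `G_S` joining vertices
of `H`, viewed as an `S`-colored multigraph. -/
def restrict (G : MG V) (S : Finset ℕ) (H : Set V) : MG V where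
  Vs := G.Vs.filter (· ∈ H)
  Es := G.Es.filter fun e => e.2.2 ∈ S ∧ e.1 ∈ H ∧ e.2.1 ∈ H

/-- The cancelling `del_{x,y} Λ` of the pair of vertices `x, y` in a `K`-colored
multigraph: delete `x`, `y` and all edges incident to them, and for every color
`i ∈ K` not realized on an edge joining `x` and `y`, add a new edge of color `i`
joining the color-`i` neighbour of `x` to the color-`i` neighbour of `y`. -/
def del (K : Finset ℕ) (G : MG V) (x y : V) : MG V :=
  { Vs := G.Vs \ {x, y}
    Es := (G.Es.filter fun e => ¬ incid e x ∧ ¬ incid e y) ∪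
      ((G.Vs ×ˢ G.Vs ×ˢ
          (K \ (K.filter fun i => ∃ e ∈ G.Es, e.2.2 = i ∧ joins e x y))).filter fun q =>
        q.1 ≠ x ∧ q.1 ≠ y ∧ q.2.1 ≠ x ∧ q.2.1 ≠ y ∧
        (∃ e ∈ G.Es, e.2.2 = q.2.2 ∧ joins e x q.1) ∧
        (∃ e ∈ G.Es, e.2.2 = q.2.2 ∧ joins e y q.2.1)) }

variable {V : Type}

lemma adj_symm (G : MG V) (S : Finset ℕ) {u v : V} (h : G.Adj S u v) : G.Adj S v u := by
  obtain ⟨hu, hv, e, he, hc, hj⟩ := h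
  exact ⟨hv, hu, e, he, hc, hj.symm⟩

lemma conn_symm (G : MG V) (S : Finset ℕ) {u v : V} (h : G.Conn S u v) : G.Conn S v u := by
  induction h with
  | refl => exact Relation.ReflTransGen.refl
  | tail _ hbc ih =>
      exact Relation.ReflTransGen.trans
        (Relation.ReflTransGen.single (G.adj_symm S hbc)) ih

lemma conn_mono (G : MG V) {S S' : Finset ℕ} (hSS : S ⊆ S') {u v : V}
    (h : G.Conn S u v) : G.Conn S' u v := by
  induction h with
  | refl => exact Relation.ReflTransGen.refl
  | tail _ hbc ih =>
      obtain ⟨hu, hv, e, he, hc, hj⟩ := hbc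
      exact ih.tail ⟨hu, hv, e, he, hSS hc, hj⟩

lemma mem_comp_self (G : MG V) (S : Finset ℕ) (v : V) : v ∈ G.comp S v :=
  Relation.ReflTransGen.refl

lemma comp_subset_Vs (G : MG V) (S : Finset ℕ) {v : V} (hv : v ∈ G.Vs) :
    G.comp S v ⊆ (G.Vs : Set V) := by
  intro w hw
  induction hw with
  | refl => exact hv
  | tail _ hbc _ => exact hbc.2.1

lemma comp_eq_of_mem (G : MG V) (S : Finset ℕ) {v w : V} (hw : w ∈ G.comp S v) :
    G.comp S v = G.comp S w := by
  ext x
  constructor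
  · intro hx
    exact Relation.ReflTransGen.trans (G.conn_symm S hw) hx
  · intro hx
    exact Relation.ReflTransGen.trans hw hx

end MG

/-- For an admissible `d`-colored multigraph `Λ` with nonempty vertex set, `P_Λ` is a
simplicial poset with least element `(G, {1,…,d})`: every interval `[⊥, (H,S)]` is
order-isomorphic to the lattice of subsets of `{1,…,d} \ S`, so `(H,S)` has rank
`d - #S`, and `dim P_Λ = d - 1` (there is an element of rank `d`, i.e. with `S = ∅`). -/
theorem stmt4 (d : ℕ) (hd : 1 ≤ d) {V : Type} (G : MG V)
    (hG : MG.Admissible (Finset.Icc 1 d) G) (hne : G.Vs.Nonempty) :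
    ∃ b : MG.PElem (Finset.Icc 1 d) G,
      b.1 = ((G.Vs : Set V), Finset.Icc 1 d) ∧
      (∀ p : MG.PElem (Finset.Icc 1 d) G, b ≤ p) ∧
      (∀ p : MG.PElem (Finset.Icc 1 d) G,
        Nonempty (Set.Icc b p ≃o {T : Finset ℕ // T ⊆ Finset.Icc 1 d \ p.1.2})) ∧
      (∀ p : MG.PElem (Finset.Icc 1 d) G,
        (Finset.Icc 1 d \ p.1.2).card = d - p.1.2.card) ∧
      (∃ ptop : MG.PElem (Finset.Icc 1 d) G, ptop.1.2 = ∅) := by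
  classical
  set K := Finset.Icc 1 d with hKdef
  obtain ⟨hWF, hconn, hmatch⟩ := hG
  obtain ⟨v₀, hv₀⟩ := hne
  have hVs : (G.Vs : Set V) = G.comp K v₀ := by
    ext w
    constructor
    · intro hw; exact hconn v₀ hv₀ w hw
    · intro hw; exact G.comp_subset_Vs K hv₀ hw
  refine ⟨⟨((G.Vs : Set V), K), subset_rfl, v₀, hv₀, hVs⟩, rfl, ?_, ?_, ?_, ?_⟩
  · -- least element
    intro p
    refine ⟨p.2.1, ?_⟩
    obtain ⟨v, hv, hp⟩ := p.2.2
    rw [hp]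
    exact G.comp_subset_Vs _ hv
  · -- intervals are boolean
    intro p
    obtain ⟨w₀, hw₀, hp1⟩ := p.2.2
    set b : MG.PElem K G := ⟨((G.Vs : Set V), K), subset_rfl, v₀, hv₀, hVs⟩ with hbdef
    have hw₀p : w₀ ∈ p.1.1 := by rw [hp1]; exact G.mem_comp_self _ _
    -- key: every element of the interval is determined by its color set
    have key : ∀ q : MG.PElem K G, q ≤ p → q.1.1 = G.comp q.1.2 w₀ := by
      intro q hq
      obtain ⟨u, hu, hq1⟩ := q.2.2
      have hw₀q : w₀ ∈ G.comp q.1.2 u := by rw [← hq1]; exact hq.2 hw₀p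
      rw [hq1, G.comp_eq_of_mem _ hw₀q]
    refine ⟨⟨⟨?_, ?_, ?_, ?_⟩, ?_⟩⟩
    · exact fun q => ⟨K \ q.1.1.2, Finset.sdiff_subset_sdiff subset_rfl q.2.2.1⟩
    · intro T
      refine ⟨⟨(G.comp (K \ T.1) w₀, K \ T.1), Finset.sdiff_subset, w₀, hw₀, rfl⟩,
        ⟨Finset.sdiff_subset, ?_⟩, ?_, ?_⟩
      · exact G.comp_subset_Vs _ hw₀
      · intro i hi
        have hiK : i ∈ K := p.2.1 hi
        have hiT : i ∉ T.1 := by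
          intro hmem
          exact (Finset.mem_sdiff.mp (T.2 hmem)).2 hi
        exact Finset.mem_sdiff.mpr ⟨hiK, hiT⟩
      · rw [hp1]
        intro x hx
        exact G.conn_mono (by
          intro i hi
          have hiK : i ∈ K := p.2.1 hi
          have hiT : i ∉ T.1 := fun hmem => (Finset.mem_sdiff.mp (T.2 hmem)).2 hi
          exact Finset.mem_sdiff.mpr ⟨hiK, hiT⟩) hx
    · -- left inverse
      intro q
      have hS : K \ (K \ q.1.1.2) = q.1.1.2 :=
        Finset.sdiff_sdiff_eq_self q.1.2.1
      refine Subtype.ext (Subtype.ext (Prod.ext ?_ ?_))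
      · show G.comp (K \ (K \ q.1.1.2)) w₀ = q.1.1.1
        rw [hS, key q.1 q.2.2]
      · exact hS
    · -- right inverse
      intro T
      exact Subtype.ext (Finset.sdiff_sdiff_eq_self (T.2.trans Finset.sdiff_subset))
    · -- order iso
      intro q q'
      show K \ q.1.1.2 ⊆ K \ q'.1.1.2 ↔ q ≤ q'
      constructor
      · intro h
        have hS : q'.1.1.2 ⊆ q.1.1.2 := by
          intro i hi
          by_contra hiq
          have : i ∈ K \ q.1.1.2 := Finset.mem_sdiff.mpr ⟨q'.1.2.1 hi, hiq⟩
          exact (Finset.mem_sdiff.mp (h this)).2 hi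
        refine ⟨hS, ?_⟩
        rw [key q.1 q.2.2, key q'.1 q'.2.2]
        intro x hx
        exact G.conn_mono hS hx
      · intro h
        exact Finset.sdiff_subset_sdiff subset_rfl h.1
  · -- rank
    intro p
    rw [Finset.card_sdiff_of_subset p.2.1, Nat.card_Icc]
    simp
  · -- top element
    exact ⟨⟨(G.comp ∅ v₀, ∅), Finset.empty_subset _, v₀, hv₀, rfl⟩, rfl⟩
end
end

section
/- Let Λ be an admissible d-colored multigraph on vertex set V, let T ⊆ {1,…,d}, and let X ⊆ V be such that every x ∈ X and every y ∈ V \ X are disconnected on Λ_T. If u, v ∈ X are distinct vertices, then for every x ∈ X \ {u,v} and every y ∈ V \ X, the vertices x and y are disconnected on (del_{{u,v}} Λ)_T. -/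
noncomputable section
attribute [local instance] Classical.propDecidable

/-- Let `Λ` be an admissible `d`-colored multigraph on vertex set `V`, `T ⊆ {1,…,d}`, and
`X ⊆ V` such that every `x ∈ X` and every `y ∈ V \ X` are disconnected on `Λ_T`.  If
`u, v ∈ X` are distinct, then for every `x ∈ X \ {u,v}` and every `y ∈ V \ X`, the
vertices `x` and `y` are disconnected on `(del_{u,v} Λ)_T`. -/
theorem stmt9 (d : ℕ) {V : Type} (G : MG V)
    (hG : MG.Admissible (Finset.Icc 1 d) G)
    (T : Finset ℕ) (hT : T ⊆ Finset.Icc 1 d)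
    (X : Finset V) (hX : X ⊆ G.Vs)
    (hsep : ∀ x ∈ X, ∀ y ∈ G.Vs, y ∉ X → ¬ G.Conn T x y)
    (u v : V) (hu : u ∈ X) (hv : v ∈ X) (huv : u ≠ v) :
    ∀ x ∈ X, x ≠ u → x ≠ v → ∀ y ∈ G.Vs, y ∉ X →
      ¬ (MG.del (Finset.Icc 1 d) G u v).Conn T x y := by
  intro x hx hxu hxv y hy hyX hconn
  have key : ∀ w, (MG.del (Finset.Icc 1 d) G u v).Conn T x w → w ∈ X := by
    intro w hw
    induction hw with
    | refl => exact hx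
    | @tail b c _ hadj ih =>
      obtain ⟨hb1, hc1, e, heE, heT, hj⟩ := hadj
      have hcV : c ∈ G.Vs := (Finset.mem_sdiff.mp hc1).1
      have hbV : b ∈ G.Vs := (Finset.mem_sdiff.mp hb1).1
      by_contra hcX
      rcases Finset.mem_union.mp heE with h | h
      · have heG : e ∈ G.Es := (Finset.mem_filter.mp h).1
        exact hsep b ih c hcV hcX
          (Relation.ReflTransGen.single ⟨hbV, hcV, e, heG, heT, hj⟩)
      · obtain ⟨hmem, hq⟩ := Finset.mem_filter.mp h
        obtain ⟨-, -, -, -, ⟨e1, he1, he1c, he1j⟩, ⟨e2, he2, he2c, he2j⟩⟩ := hq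
        have huV : u ∈ G.Vs := hX hu
        have hvV : v ∈ G.Vs := hX hv
        rcases hj with ⟨h1, h2⟩ | ⟨h1, h2⟩
        · -- e.1 = b, e.2.1 = c : c is joined to v via e2
          have : G.Conn T v c := by
            refine Relation.ReflTransGen.single ⟨hvV, hcV, e2, he2, ?_, ?_⟩
            · rw [he2c]; exact heT
            · rw [h2] at he2j
              rcases he2j with ⟨a1, a2⟩ | ⟨a1, a2⟩
              · exact Or.inl ⟨a1, a2⟩
              · exact Or.inr ⟨a1, a2⟩
          exact hsep v hv c hcV hcX this
        · -- e.1 = c, e.2.1 = b : c is joined to u via e1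
          have : G.Conn T u c := by
            refine Relation.ReflTransGen.single ⟨huV, hcV, e1, he1, ?_, ?_⟩
            · rw [he1c]; exact heT
            · rw [h1] at he1j
              rcases he1j with ⟨a1, a2⟩ | ⟨a1, a2⟩
              · exact Or.inl ⟨a1, a2⟩
              · exact Or.inr ⟨a1, a2⟩
          exact hsep u hu c hcV hcX this
  exact hyX (key y hconn)
end
end

section
/- Fix integers n, m ≥ 1. The map Φ defined by Φ(S) = {1, …, n−#S} ∪ S is a bijection from X onto the set of all n-element subsets of {1,…,n+m} other than {1,…,n}; in particular the sets X_1, …, X_n are pairwise disjoint and #X = C(n+m, n) − 1. -/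
noncomputable section
attribute [local instance] Classical.propDecidable

/-- `S ∈ X_j`, i.e. `S ⊆ {j+1,…,n+m}` and `#S = n+1-j`, for `1 ≤ j ≤ n`. -/
def inXj (n m j : ℕ) (S : Finset ℕ) : Prop :=
  1 ≤ j ∧ j ≤ n ∧ S ⊆ Finset.Icc (j+1) (n+m) ∧ S.card = n + 1 - j

/-- `S ∈ X = X_1 ∪ ⋯ ∪ X_n`. -/
def inX (n m : ℕ) (S : Finset ℕ) : Prop := ∃ j, inXj n m j S

/-- `X` as a finite set of finsets. -/
def Xset (n m : ℕ) : Finset (Finset ℕ) :=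
  (Finset.Icc 1 (n+m)).powerset.filter (inX n m)

lemma phi_eq {n m j : ℕ} {S : Finset ℕ} (h : inXj n m j S) :
    Finset.Icc 1 (n - S.card) ∪ S = Finset.Icc 1 (j-1) ∪ S := by
  obtain ⟨h1, h2, h3, h4⟩ := h
  congr 2
  omega

lemma phi_disj {n m j : ℕ} {S : Finset ℕ} (h : inXj n m j S) :
    Disjoint (Finset.Icc 1 (j-1)) S := by
  obtain ⟨h1, h2, h3, h4⟩ := h
  rw [Finset.disjoint_left]
  intro a ha haS
  have h5 := h3 haS
  simp [Finset.mem_Icc] at ha h5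
  omega

lemma phi_notmem {n m j : ℕ} {S : Finset ℕ} (h : inXj n m j S) :
    j ∉ Finset.Icc 1 (j-1) ∪ S := by
  obtain ⟨h1, h2, h3, h4⟩ := h
  intro hmem
  rcases Finset.mem_union.1 hmem with hh | hh
  · simp [Finset.mem_Icc] at hh; omega
  · have := h3 hh; simp [Finset.mem_Icc] at this

lemma phi_mapsto {n m j : ℕ} {S : Finset ℕ} (hn : 1 ≤ n) (h : inXj n m j S) :
    (Finset.Icc 1 (j-1) ∪ S) ⊆ Finset.Icc 1 (n+m) ∧
    (Finset.Icc 1 (j-1) ∪ S).card = n ∧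
    (Finset.Icc 1 (j-1) ∪ S) ≠ Finset.Icc 1 n := by
  obtain ⟨h1, h2, h3, h4⟩ := h
  refine ⟨?_, ?_, ?_⟩
  · apply Finset.union_subset
    · exact Finset.Icc_subset_Icc le_rfl (by omega)
    · exact h3.trans (Finset.Icc_subset_Icc (by omega) le_rfl)
  · rw [Finset.card_union_of_disjoint (phi_disj ⟨h1, h2, h3, h4⟩), h4, Nat.card_Icc]
    omega
  · intro heq
    have hj : j ∈ Finset.Icc 1 n := by simp [Finset.mem_Icc]; omega
    rw [← heq] at hj
    exact phi_notmem ⟨h1, h2, h3, h4⟩ hj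

/-- The map `Φ(S) = {1,…,n-#S} ∪ S` is a bijection from `X` onto the set of `n`-element
subsets of `{1,…,n+m}` other than `{1,…,n}`; in particular the sets `X_1,…,X_n` are
pairwise disjoint and `#X = C(n+m,n) - 1`. -/
theorem stmt10 (n m : ℕ) (hn : 1 ≤ n) (hm : 1 ≤ m) :
    Set.BijOn (fun S : Finset ℕ => Finset.Icc 1 (n - S.card) ∪ S)
      {S : Finset ℕ | inX n m S}
      {F : Finset ℕ | F ⊆ Finset.Icc 1 (n+m) ∧ F.card = n ∧ F ≠ Finset.Icc 1 n} ∧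
    (∀ j j' : ℕ, ∀ S : Finset ℕ, inXj n m j S → inXj n m j' S → j = j') ∧
    (Xset n m).card = (n+m).choose n - 1 := by
  have hbij : Set.BijOn (fun S : Finset ℕ => Finset.Icc 1 (n - S.card) ∪ S)
      {S : Finset ℕ | inX n m S}
      {F : Finset ℕ | F ⊆ Finset.Icc 1 (n+m) ∧ F.card = n ∧ F ≠ Finset.Icc 1 n} := by
    refine ⟨?_, ?_, ?_⟩
    · -- MapsTo
      rintro S ⟨j, hj⟩
      simp only [Set.mem_setOf_eq]
      rw [phi_eq hj]
      exact phi_mapsto hn hj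
    · -- InjOn
      rintro S1 ⟨j1, hj1⟩ S2 ⟨j2, hj2⟩ heq
      simp only at heq
      rw [phi_eq hj1, phi_eq hj2] at heq
      have hjj : j1 = j2 := by
        by_contra hne
        rcases Nat.lt_or_ge j1 j2 with h | h
        · apply phi_notmem hj1
          rw [heq]
          exact Finset.mem_union_left _
            (by simp [Finset.mem_Icc]; obtain ⟨a1,_,_,_⟩ := hj1; omega)
        · apply phi_notmem hj2
          rw [← heq]
          refine Finset.mem_union_left _
            (by simp [Finset.mem_Icc]; obtain ⟨a1,_,_,_⟩ := hj2; omega)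
      subst hjj
      calc S1 = (Finset.Icc 1 (j1-1) ∪ S1) \ Finset.Icc 1 (j1-1) := by
                rw [Finset.union_sdiff_cancel_left (phi_disj hj1)]
        _ = (Finset.Icc 1 (j1-1) ∪ S2) \ Finset.Icc 1 (j1-1) := by rw [heq]
        _ = S2 := Finset.union_sdiff_cancel_left (phi_disj hj2)
    · -- SurjOn
      rintro F ⟨hFsub, hFcard, hFne⟩
      have hexists : ∃ k, 1 ≤ k ∧ k ∉ F := by
        by_contra h
        push_neg at h
        apply hFne
        refine (Finset.eq_of_subset_of_card_le ?_ ?_).symm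
        · intro i hi
          simp [Finset.mem_Icc] at hi
          exact h i hi.1
        · rw [hFcard, Nat.card_Icc]; omega
      set j := Nat.find hexists with hjdef
      obtain ⟨hj1, hjF⟩ := Nat.find_spec hexists
      have hjle : j ≤ n := by
        by_contra hlt
        apply hFne
        refine (Finset.eq_of_subset_of_card_le ?_ ?_).symm
        · intro i hi
          simp [Finset.mem_Icc] at hi
          have := Nat.find_min hexists (show i < j by omega)
          push_neg at this
          exact this hi.1
        · rw [hFcard, Nat.card_Icc]; omega
      have hsub : Finset.Icc 1 (j-1) ⊆ F := by
        intro i hi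
        simp [Finset.mem_Icc] at hi
        have := Nat.find_min hexists (show i < j by omega)
        push_neg at this
        exact this hi.1
      set S := F \ Finset.Icc 1 (j-1) with hSdef
      have hScard : S.card = n + 1 - j := by
        rw [hSdef, Finset.card_sdiff_of_subset hsub, hFcard, Nat.card_Icc]
        omega
      have hSsub : S ⊆ Finset.Icc (j+1) (n+m) := by
        intro x hx
        rw [hSdef, Finset.mem_sdiff] at hx
        obtain ⟨hxF, hxI⟩ := hx
        have h1 := hFsub hxF
        simp [Finset.mem_Icc] at h1 hxI ⊢
        have hxj : x ≠ j := fun heq => hjF (by rwa [heq] at hxF)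
        omega
      refine ⟨S, ⟨j, hj1, hjle, hSsub, hScard⟩, ?_⟩
      simp only
      rw [phi_eq ⟨hj1, hjle, hSsub, hScard⟩, hSdef]
      exact Finset.union_sdiff_of_subset hsub
  refine ⟨hbij, ?_, ?_⟩
  · -- disjointness
    rintro j j' S ⟨h1, h2, h3, h4⟩ ⟨h1', h2', h3', h4'⟩
    omega
  · -- cardinality
    have hXmem : ∀ S, S ∈ Xset n m ↔ inX n m S := by
      intro S
      rw [Xset, Finset.mem_filter, Finset.mem_powerset]
      constructor
      · exact fun h => h.2
      · intro h
        refine ⟨?_, h⟩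
        obtain ⟨j, h1, h2, h3, h4⟩ := h
        exact h3.trans (Finset.Icc_subset_Icc (by omega) le_rfl)
    set T := (Finset.Icc 1 (n+m)).powersetCard n \ {Finset.Icc 1 n} with hTdef
    have hTmem : ∀ F, F ∈ T ↔
        (F ⊆ Finset.Icc 1 (n+m) ∧ F.card = n ∧ F ≠ Finset.Icc 1 n) := by
      intro F
      rw [hTdef, Finset.mem_sdiff, Finset.mem_powersetCard, Finset.mem_singleton]
      tauto
    have hcard : (Xset n m).card = T.card := by
      apply Finset.card_bij (fun S _ => Finset.Icc 1 (n - S.card) ∪ S)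
      · intro a ha
        rw [hTmem]
        exact hbij.1 ((hXmem a).1 ha)
      · intro a ha b hb h
        exact hbij.2.1 ((hXmem a).1 ha) ((hXmem b).1 hb) h
      · intro b hb
        obtain ⟨a, ha, hab⟩ := hbij.2.2 ((hTmem b).1 hb)
        exact ⟨a, (hXmem a).2 ha, hab⟩
    rw [hcard, hTdef, Finset.card_sdiff_of_subset]
    · rw [Finset.card_powersetCard, Nat.card_Icc, Finset.card_singleton]
      norm_num
    · simp only [Finset.singleton_subset_iff, Finset.mem_powersetCard]
      exact ⟨Finset.Icc_subset_Icc le_rfl (by omega), by rw [Nat.card_Icc]; omega⟩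
end
end
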